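/- arXiv:1012.3244 — 2 statements merged into one kernel-verified Lean document; each statement's English description precedes it below -/
import Mathlib

section
/- Let G ≅ ℤ^k ⊕ ℤ_{n_1} ⊕ … ⊕ ℤ_{n_t} with n_{i+1} ∣ n_i, presented as F/R as below, with R_i = ⟨x_{k+i}^{n_i}⟩, and let 1 ≤ c_2 ≤ c_1 ≤ 2c_2. Then [R, _{c_1}F, γ_{c_2+1}(F)] ≡ ∏_{i=1}^t [R_i, _{c_1}F, γ_{c_2+1}(F)] (mod H) and [R, _{c_2}F, γ_{c_1+1}(F)] ≡ ∏_{i=1}^t [R_i, _{c_2}F, γ_{c_1+1}(F)] (mod H), where ≡ (mod H) means the two subgroups have the same product with H. -/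
namespace PaperFormal

open Subgroup
open scoped commutatorElement

/-- The set of values of the words in `V` in the group `G`. -/
def wordValues {α : Type*} (V : Set (FreeGroup α)) (G : Type*) [Group G] : Set G :=
  {g | ∃ v ∈ V, ∃ f : α → G, FreeGroup.lift f v = g}

/-- The verbal subgroup `V(G)` of `G` with respect to a set of words `V`. -/
def verbal {α : Type*} (V : Set (FreeGroup α)) (G : Type*) [Group G] : Subgroup G :=
  Subgroup.closure (wordValues V G)

/-- The marginal set `V*(G)`: the set of `g ∈ G` such that replacing any single entry
`gᵢ` by `gᵢ * g` does not change the value of any word `v ∈ V`. -/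
def marginalSet {α : Type*} [DecidableEq α] (V : Set (FreeGroup α)) (G : Type*) [Group G] :
    Set G :=
  {g | ∀ v ∈ V, ∀ f : α → G, ∀ i : α,
    FreeGroup.lift (Function.update f i (f i * g)) v = FreeGroup.lift f v}

/-- The subgroup `[K V* G]`. -/
def KVstar {α : Type*} [DecidableEq α] (V : Set (FreeGroup α)) {G : Type*} [Group G]
    (K : Subgroup G) : Subgroup G :=
  Subgroup.closure {x | ∃ v ∈ V, ∃ f : α → G, ∃ i : α, ∃ r ∈ K,
    x = FreeGroup.lift (Function.update f i (f i * r)) v * (FreeGroup.lift f v)⁻¹}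

/-- The quotient group `A/B`, for subgroups `A B` of an ambient group (mathematically
meaningful when `B` is a subgroup of `A` normalized by `A`; we take the normal closure of
`B ∩ A` inside `A`, which equals `B` in that case). -/
abbrev quotBy {G : Type*} [Group G] (A B : Subgroup G) : Type _ :=
  ↥A ⧸ Subgroup.normalClosure ((B.subgroupOf A : Subgroup ↥A) : Set ↥A)

/-- The canonical projection onto `quotBy A B`. -/
def quotByMk {G : Type*} [Group G] {A : Subgroup G} (B : Subgroup G) (a : ↥A) :
    quotBy A B := QuotientGroup.mk a

/-- The natural homomorphism `A/B → A'/B'` when `A ≤ A'` and `B ≤ B'`. -/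
def quotByHom {G : Type*} [Group G] {A A' B B' : Subgroup G} (hA : A ≤ A') (hB : B ≤ B') :
    quotBy A B →* quotBy A' B' :=
  QuotientGroup.lift _ ((QuotientGroup.mk' _).comp (Subgroup.inclusion hA)) (by
    intro x hx
    have : x ∈ ((QuotientGroup.mk' (Subgroup.normalClosure
        ((B'.subgroupOf A' : Subgroup ↥A') : Set ↥A'))).comp (Subgroup.inclusion hA)).ker := by
      refine Subgroup.normalClosure_le_normal ?_ hx
      intro y hy
      simp only [SetLike.mem_coe, Subgroup.mem_subgroupOf] at hy
      simp only [SetLike.mem_coe, MonoidHom.mem_ker, MonoidHom.comp_apply,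
        QuotientGroup.mk'_apply]
      rw [QuotientGroup.eq_one_iff]
      refine Subgroup.subset_normalClosure ?_
      simp only [SetLike.mem_coe, Subgroup.mem_subgroupOf, Subgroup.coe_inclusion]
      exact hB hy
    exact this)

/-- The Baer invariant `𝔙M(G) = (R ∩ V(F))/[R V* F]` of `G ≅ F/R` with respect to the
set of words `V`. -/
abbrev BaerInv {α : Type*} [DecidableEq α] (V : Set (FreeGroup α)) {F : Type*} [Group F]
    (R : Subgroup F) : Type _ :=
  quotBy (R ⊓ verbal V F) (KVstar V R)

/-- The natural homomorphism `𝔙M(F/R) → 𝔙M(F/S)` for `R ≤ S`. -/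
def baerMap {α : Type*} [DecidableEq α] (V : Set (FreeGroup α)) {F : Type*} [Group F]
    {R S : Subgroup F} (h : R ≤ S) : BaerInv V R →* BaerInv V S :=
  quotByHom (inf_le_inf_right _ h) (Subgroup.closure_mono (by
    rintro x ⟨v, hv, f, i, r, hr, rfl⟩
    exact ⟨v, hv, f, i, r, h hr, rfl⟩))

/-- A group `G` is `V`-capable if `G ≅ E/V*(E)` for some group `E`; equivalently there
is a surjection `E → G` whose kernel is exactly the marginal subgroup `V*(E)`. -/
def VCapable {α : Type*} [DecidableEq α] (V : Set (FreeGroup α)) (G : Type*) [Group G] : Prop :=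
  ∃ (E : Type*) (_ : Group E) (φ : E →* G),
    Function.Surjective φ ∧ (φ.ker : Set E) = marginalSet V E

/-- A group `G` is capable if `G ≅ E/Z(E)` for some group `E`. -/
def Capable (G : Type*) [Group G] : Prop :=
  ∃ (E : Type*) (_ : Group E) (φ : E →* G),
    Function.Surjective φ ∧ φ.ker = Subgroup.center E

/-- A group `G` is `𝔑_c`-capable if `G ≅ E/Z_c(E)` for some group `E`. -/
def NCapable (c : ℕ) (G : Type*) [Group G] : Prop :=
  ∃ (E : Type*) (_ : Group E) (φ : E →* G),
    Function.Surjective φ ∧ φ.ker = _root_.upperCentralSeries E c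

/-- The nilpotency word `[…[[x₀,x₁],x₂],…,x_c]` defining the variety `𝔑_c`. -/
def nilpWord : ℕ → FreeGroup ℕ
  | 0 => FreeGroup.of 0
  | c + 1 => ⁅nilpWord c, FreeGroup.of (c + 1)⁆

/-- The outer commutator word `[[…[x₁,x₂],…,x_{c₁+1}], […[y₁,y₂],…,y_{c₂+1}]]`
(in `c₁+c₂+2` distinct variables) defining the variety `[𝔑_{c₁},𝔑_{c₂}]`. -/
def outerWord (c₁ c₂ : ℕ) : FreeGroup ℕ :=
  ⁅nilpWord c₁, FreeGroup.map (fun i => i + (c₁ + 1)) (nilpWord c₂)⁆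

/-- The solvability word `δ_ℓ` (on `2^ℓ` distinct variables) defining the variety `𝔖_ℓ`. -/
def deltaWord : ℕ → FreeGroup ℕ
  | 0 => FreeGroup.of 0
  | ℓ + 1 => ⁅deltaWord ℓ, FreeGroup.map (fun i => i + 2 ^ ℓ) (deltaWord ℓ)⁆

/-- `[R, F, F, …, F]` with `c` occurrences of `F`. -/
def iterBracket {G : Type*} [Group G] (R : Subgroup G) : ℕ → Subgroup G
  | 0 => R
  | c + 1 => ⁅iterBracket R c, (⊤ : Subgroup G)⁆

/-- Formal commutators on a set `X` of generators. -/
inductive FC (X : Type*) : Type _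
  | of : X → FC X
  | comm : FC X → FC X → FC X

namespace FC

/-- The weight of a formal commutator. -/
def wt {X : Type*} : FC X → ℕ
  | .of _ => 1
  | .comm a b => wt a + wt b

/-- The value of a formal commutator in the free group on `X`. -/
def val {X : Type*} : FC X → FreeGroup X
  | .of x => FreeGroup.of x
  | .comm a b => ⁅val a, val b⁆

/-- Whether the generator `x` occurs in a formal commutator. -/
def occurs {X : Type*} (x : X) : FC X → Prop
  | .of y => x = y
  | .comm a b => occurs x a ∨ occurs x b

/-- The standard ordering of (basic) commutators: first by weight, commutators of the
same weight being compared lexicographically in their two components. -/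
def cmp {X : Type*} [LinearOrder X] : FC X → FC X → Ordering
  | .of x, .of y => compare x y
  | .of x, .comm a b => (compare (wt (FC.of x)) (wt (FC.comm a b))).then .lt
  | .comm a b, .of y => (compare (wt (FC.comm a b)) (wt (FC.of y))).then .gt
  | .comm a b, .comm c d =>
      (compare (wt (FC.comm a b)) (wt (FC.comm c d))).then ((cmp a c).then (cmp b d))

/-- Basic commutators on a totally ordered set `X`: elements of `X` are basic of weight
one; `[cᵢ,cⱼ]` is basic provided `cᵢ, cⱼ` are basic, `cᵢ > cⱼ`, and if `cᵢ = [c_s,c_t]`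
then `cⱼ ≥ c_t`. -/
inductive IsBasic {X : Type*} [LinearOrder X] : FC X → Prop
  | of (x : X) : IsBasic (.of x)
  | comm {ci cj : FC X} : IsBasic ci → IsBasic cj → cmp cj ci = .lt →
      (∀ cs ct : FC X, ci = .comm cs ct → cmp cj ct ≠ .lt) → IsBasic (.comm ci cj)

end FC

/-- `Q` is a free abelian group with basis the subset `s ⊆ Q`. -/
def IsFreeAbelianWithBasis (Q : Type*) [Group Q] (s : Set Q) : Prop :=
  ∃ e : Q ≃* Multiplicative (FreeAbelianGroup s),
    ∀ (q : Q) (h : q ∈ s), e q = Multiplicative.ofAdd (FreeAbelianGroup.of (⟨q, h⟩ : s))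

/-- The Witt function `χ_n(d) = (1/n) ∑_{m ∣ n} μ(m) d^{n/m}`. -/
def chi (n d : ℕ) : ℕ :=
  ((∑ m ∈ n.divisors, (ArithmeticFunction.moebius m) * (d : ℤ) ^ (n / m)) / (n : ℤ)).toNat


/-! Setup for the free presentation of `G ≅ ℤ^k ⊕ ℤ_{n 0} ⊕ ⋯ ⊕ ℤ_{n (t-1)}`:
`F` is the free group on `x_0, …, x_{k+t-1}` and `R` is the (normal) subgroup of `F`
generated by `γ₂(F)` together with the elements `x_{k+i} ^ (n i)`. -/

/-- The index of the generator `x_{k+i}`. -/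
def xIdx (k t : ℕ) (i : Fin t) : Fin (k + t) := ⟨k + i, Nat.add_lt_add_left i.isLt k⟩

/-- The generator `x_{k+i}` of the free group `F`. -/
def xGen (k t : ℕ) (i : Fin t) : FreeGroup (Fin (k + t)) := FreeGroup.of (xIdx k t i)

/-- The subgroup `R` of `F`, generated by `γ₂(F)` and the `x_{k+i} ^ (n i)`; it is
automatically normal since it contains the commutator subgroup. -/
def Rsub (k t : ℕ) (n : Fin t → ℕ) : Subgroup (FreeGroup (Fin (k + t))) :=
  Subgroup.lowerCentralSeries (⊤ : Subgroup (FreeGroup (Fin (k + t)))) 1 ⊔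
    Subgroup.closure {g | ∃ i : Fin t, g = xGen k t i ^ n i}

/-- The cyclic subgroup `R_i = ⟨x_{k+i} ^ (n i)⟩`. -/
def Rcyc (k t : ℕ) (n : Fin t → ℕ) (i : Fin t) : Subgroup (FreeGroup (Fin (k + t))) :=
  Subgroup.closure {xGen k t i ^ n i}

/-- The subgroup `[γ_{c₁+1}(F), γ_{c₂+1}(F)]` (note `γ_{c+1}(F)` is
`lowerCentralSeries F c` in Mathlib's indexing). -/
def gammaComm (k t c₁ c₂ : ℕ) : Subgroup (FreeGroup (Fin (k + t))) :=
  ⁅Subgroup.lowerCentralSeries (⊤ : Subgroup (FreeGroup (Fin (k + t)))) c₁,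
   Subgroup.lowerCentralSeries (⊤ : Subgroup (FreeGroup (Fin (k + t)))) c₂⁆

/-- The product `[R, _{c₁}F, γ_{c₂+1}(F)]·[R, _{c₂}F, γ_{c₁+1}(F)]` (a product of two
normal subgroups, hence equal to their join). -/
def Psub (k t : ℕ) (n : Fin t → ℕ) (c₁ c₂ : ℕ) : Subgroup (FreeGroup (Fin (k + t))) :=
  ⁅iterBracket (Rsub k t n) c₁, Subgroup.lowerCentralSeries (⊤ : Subgroup (FreeGroup (Fin (k + t)))) c₂⁆ ⊔
  ⁅iterBracket (Rsub k t n) c₂, Subgroup.lowerCentralSeries (⊤ : Subgroup (FreeGroup (Fin (k + t)))) c₁⁆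

/-- `H = ([R, _{c₁}F, γ_{c₂+1}(F)]·[R, _{c₂}F, γ_{c₁+1}(F)]) ∩ γ_{c₁+c₂+3}(F)`. -/
def Hsub (k t : ℕ) (n : Fin t → ℕ) (c₁ c₂ : ℕ) : Subgroup (FreeGroup (Fin (k + t))) :=
  Psub k t n c₁ c₂ ⊓ Subgroup.lowerCentralSeries (⊤ : Subgroup (FreeGroup (Fin (k + t)))) (c₁ + c₂ + 2)

/-- The set `A` of commutators `[β,α]` of basic commutators `β > α` of weights
`c₁+1` and `c₂+1` respectively. -/
def Aset (k t c₁ c₂ : ℕ) : Set (FreeGroup (Fin (k + t))) :=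
  {g | ∃ β α : FC (Fin (k + t)), β.IsBasic ∧ α.IsBasic ∧ β.wt = c₁ + 1 ∧ α.wt = c₂ + 1 ∧
    FC.cmp α β = .lt ∧ g = ⁅β.val, α.val⁆}
/-! Since `R = γ₂(F) · ∏ᵢ Rᵢ` and `[γ₂(F), _c F] = γ_{c+2}(F)`, for `c ≥ 1` the subgroup
`[R, _c F, γ_{d+1}(F)]` splits as `[γ_{c+2}(F), γ_{d+1}(F)] · ∏ᵢ [Rᵢ, _c F, γ_{d+1}(F)]`: the factors
`[Rᵢ, _c F]` are normal, so commutators distribute over their product. By the three subgroups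
lemma the first factor lies in `γ_{c+d+3}(F)`, and it lies in `[R, _c F, γ_{d+1}(F)]`, so it is
absorbed into `H` whenever `c + d = c₁ + c₂`. -/

section Commutators

variable {G : Type*} [Group G]

lemma commutator_top_normal (H : Subgroup G) : (⁅H, (⊤ : Subgroup G)⁆).Normal :=
  normalizer_eq_top_iff.mp (top_le_iff.mp (normalizer_commutator_ge_right H ⊤))

lemma commutator_iSup_left_of_normal {ι : Sort*} (A : ι → Subgroup G) (L : Subgroup G)
    [(⨆ i, ⁅A i, L⁆).Normal] : ⁅⨆ i, A i, L⁆ = ⨆ i, ⁅A i, L⁆ := by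
  refine le_antisymm (commutator_le.mpr fun x hx l hl => ?_)
    (iSup_le fun i => commutator_mono (le_iSup A i) le_rfl)
  refine iSup_induction A (C := fun x => ⁅x, l⁆ ∈ ⨆ i, ⁅A i, L⁆) hx
    (fun i y hy => mem_iSup_of_mem i (commutator_mem_commutator hy hl)) ?_ fun x y hx hy => ?_
  · simpa only [commutatorElement_one_left] using one_mem _
  · rw [commutatorElement_mul_left_eq_conj_mul]
    exact mul_mem (Normal.conj_mem inferInstance _ hy x) hx

/-- The three subgroups lemma. -/
lemma commutator_commutator_le_of_rotate {A B C N : Subgroup G} [N.Normal]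
    (h1 : ⁅⁅B, C⁆, A⁆ ≤ N) (h2 : ⁅⁅C, A⁆, B⁆ ≤ N) : ⁅⁅A, B⁆, C⁆ ≤ N := by
  have in_quotient : ∀ X Y Z : Subgroup G, ⁅⁅X, Y⁆, Z⁆ ≤ N ↔
      ⁅⁅X.map (QuotientGroup.mk' N), Y.map (QuotientGroup.mk' N)⁆,
        Z.map (QuotientGroup.mk' N)⁆ = ⊥ := by
    intro X Y Z
    rw [← map_commutator, ← map_commutator, eq_bot_iff, map_le_iff_le_comap,
      MonoidHom.comap_bot, QuotientGroup.ker_mk']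
  rw [in_quotient]
  exact commutator_commutator_eq_bot_of_rotate ((in_quotient B C A).mp h1)
    ((in_quotient C A B).mp h2)

lemma commutator_lowerCentralSeries_le (m n : ℕ) :
    ⁅(⊤ : Subgroup G).lowerCentralSeries m, (⊤ : Subgroup G).lowerCentralSeries n⁆ ≤
      (⊤ : Subgroup G).lowerCentralSeries (m + n + 1) := by
  induction n generalizing m with
  | zero => exact le_rfl
  | succ n ih =>
    rw [Subgroup.lowerCentralSeries_succ, commutator_comm]
    refine commutator_commutator_le_of_rotate ?_ ?_
    · rw [commutator_comm ⊤, ← Subgroup.lowerCentralSeries_succ,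
        show m + (n + 1) + 1 = m + 1 + n + 1 by omega]
      exact ih (m + 1)
    · exact commutator_mono (ih m) le_rfl

lemma iterBracket_mono {R S : Subgroup G} (h : R ≤ S) (c : ℕ) :
    iterBracket R c ≤ iterBracket S c := by
  induction c with
  | zero => exact h
  | succ c ih => exact commutator_mono ih le_rfl

lemma iterBracket_lowerCentralSeries (m c : ℕ) :
    iterBracket ((⊤ : Subgroup G).lowerCentralSeries m) c =
      (⊤ : Subgroup G).lowerCentralSeries (m + c) := by
  induction c with
  | zero => rfl
  | succ c ih => rw [iterBracket, ih]; rfl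

lemma iterBracket_iSup {ι : Sort*} (A : ι → Subgroup G) (c : ℕ) :
    iterBracket (⨆ i, A i) c = ⨆ i, iterBracket (A i) c := by
  induction c with
  | zero => rfl
  | succ c ih =>
    have := fun i => commutator_top_normal (iterBracket (A i) c)
    rw [iterBracket, ih]
    exact commutator_iSup_left_of_normal _ _

lemma commutator_iterBracket_iSup {ι : Sort*} (A : ι → Subgroup G) (L : Subgroup G) [L.Normal]
    (c : ℕ) : ⁅iterBracket (⨆ i, A i) (c + 1), L⁆ = ⨆ i, ⁅iterBracket (A i) (c + 1), L⁆ := by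
  have : ∀ i, (iterBracket (A i) (c + 1)).Normal := fun i => commutator_top_normal _
  rw [iterBracket_iSup]
  exact commutator_iSup_left_of_normal _ _

end Commutators

lemma Rsub_eq_iSup (k t : ℕ) (n : Fin t → ℕ) :
    Rsub k t n = ⨆ o : Option (Fin t),
      o.elim ((⊤ : Subgroup (FreeGroup (Fin (k + t)))).lowerCentralSeries 1) (Rcyc k t n) := by
  unfold Rsub Rcyc
  rw [iSup_option_elim, ← Subgroup.closure_iUnion]
  congr 2
  rw [Set.iUnion_singleton_eq_range]
  ext g
  exact exists_congr fun i => eq_comm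

lemma commutator_iterBracket_Rsub (k t : ℕ) (n : Fin t → ℕ) (c d : ℕ) :
    ⁅iterBracket (Rsub k t n) (c + 1), (⊤ : Subgroup (FreeGroup (Fin (k + t)))).lowerCentralSeries d⁆
      = ⁅(⊤ : Subgroup (FreeGroup (Fin (k + t)))).lowerCentralSeries (c + 2),
          (⊤ : Subgroup (FreeGroup (Fin (k + t)))).lowerCentralSeries d⁆
        ⊔ ⨆ i, ⁅iterBracket (Rcyc k t n i) (c + 1),
            (⊤ : Subgroup (FreeGroup (Fin (k + t)))).lowerCentralSeries d⁆ := by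
  rw [Rsub_eq_iSup, commutator_iterBracket_iSup, iSup_option]
  simp only [Option.elim, iterBracket_lowerCentralSeries, add_comm 1]

lemma commutator_iterBracket_Rsub_sup_Hsub {k t : ℕ} {n : Fin t → ℕ} {c₁ c₂ c d : ℕ}
    (hc : 1 ≤ c) (hcd : c + d = c₁ + c₂)
    (hP : ⁅iterBracket (Rsub k t n) c, (⊤ : Subgroup (FreeGroup (Fin (k + t)))).lowerCentralSeries d⁆
      ≤ Psub k t n c₁ c₂) :
    ⁅iterBracket (Rsub k t n) c, (⊤ : Subgroup (FreeGroup (Fin (k + t)))).lowerCentralSeries d⁆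
        ⊔ Hsub k t n c₁ c₂
      = (⨆ i, ⁅iterBracket (Rcyc k t n i) c,
          (⊤ : Subgroup (FreeGroup (Fin (k + t)))).lowerCentralSeries d⁆) ⊔ Hsub k t n c₁ c₂ := by
  obtain ⟨c, rfl⟩ := Nat.exists_eq_add_of_le' hc
  have lcs_le_R : (⊤ : Subgroup (FreeGroup (Fin (k + t)))).lowerCentralSeries (c + 2) ≤
      iterBracket (Rsub k t n) (c + 1) := by
    have h := iterBracket_mono (le_sup_left : _ ≤ Rsub k t n) (c + 1)
    rwa [iterBracket_lowerCentralSeries, show 1 + (c + 1) = c + 2 by omega] at h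
  have lcs_le_H : ⁅(⊤ : Subgroup (FreeGroup (Fin (k + t)))).lowerCentralSeries (c + 2),
      (⊤ : Subgroup (FreeGroup (Fin (k + t)))).lowerCentralSeries d⁆ ≤ Hsub k t n c₁ c₂ := by
    refine le_inf ((commutator_mono lcs_le_R le_rfl).trans hP) ?_
    rw [show c₁ + c₂ + 2 = c + 2 + d + 1 by omega]
    exact commutator_lowerCentralSeries_le _ _
  rw [commutator_iterBracket_Rsub, sup_right_comm, sup_of_le_right lcs_le_H, sup_comm]

theorem statement_3_general (k t : ℕ) (n : Fin t → ℕ)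
    (c₁ c₂ : ℕ) (hc₂ : 1 ≤ c₂) (hc₁ : c₂ ≤ c₁) :
    (⁅iterBracket (Rsub k t n) c₁, Subgroup.lowerCentralSeries (⊤ : Subgroup (FreeGroup (Fin (k + t)))) c₂⁆
        ⊔ Hsub k t n c₁ c₂
      = (⨆ i : Fin t,
          ⁅iterBracket (Rcyc k t n i) c₁, Subgroup.lowerCentralSeries (⊤ : Subgroup (FreeGroup (Fin (k + t)))) c₂⁆)
        ⊔ Hsub k t n c₁ c₂) ∧
    (⁅iterBracket (Rsub k t n) c₂, Subgroup.lowerCentralSeries (⊤ : Subgroup (FreeGroup (Fin (k + t)))) c₁⁆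
        ⊔ Hsub k t n c₁ c₂
      = (⨆ i : Fin t,
          ⁅iterBracket (Rcyc k t n i) c₂, Subgroup.lowerCentralSeries (⊤ : Subgroup (FreeGroup (Fin (k + t)))) c₁⁆)
        ⊔ Hsub k t n c₁ c₂) :=
  ⟨commutator_iterBracket_Rsub_sup_Hsub (hc₂.trans hc₁) rfl le_sup_left,
    commutator_iterBracket_Rsub_sup_Hsub hc₂ (add_comm _ _) le_sup_right⟩

/-- With `F/R` the given free presentation and `R_i = ⟨x_{k+i}^{n i}⟩`,
for `1 ≤ c₂ ≤ c₁ ≤ 2c₂` we have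
`[R, _{c₁}F, γ_{c₂+1}(F)] ≡ ∏ᵢ [Rᵢ, _{c₁}F, γ_{c₂+1}(F)] (mod H)` and
`[R, _{c₂}F, γ_{c₁+1}(F)] ≡ ∏ᵢ [Rᵢ, _{c₂}F, γ_{c₁+1}(F)] (mod H)`,
i.e. in each case the two subgroups have the same product with `H`. -/
theorem statement_3 (k t : ℕ) (n : Fin t → ℕ) (hn : ∀ i, 0 < n i)
    (hdvd : ∀ (i : Fin t) (h : (i : ℕ) + 1 < t), n ⟨(i : ℕ) + 1, h⟩ ∣ n i)
    (c₁ c₂ : ℕ) (hc₂ : 1 ≤ c₂) (hc₁ : c₂ ≤ c₁) (hc : c₁ ≤ 2 * c₂) :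
    (⁅iterBracket (Rsub k t n) c₁, Subgroup.lowerCentralSeries (⊤ : Subgroup (FreeGroup (Fin (k + t)))) c₂⁆
        ⊔ Hsub k t n c₁ c₂
      = (⨆ i : Fin t,
          ⁅iterBracket (Rcyc k t n i) c₁, Subgroup.lowerCentralSeries (⊤ : Subgroup (FreeGroup (Fin (k + t)))) c₂⁆)
        ⊔ Hsub k t n c₁ c₂) ∧
    (⁅iterBracket (Rsub k t n) c₂, Subgroup.lowerCentralSeries (⊤ : Subgroup (FreeGroup (Fin (k + t)))) c₁⁆
        ⊔ Hsub k t n c₁ c₂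
      = (⨆ i : Fin t,
          ⁅iterBracket (Rcyc k t n i) c₂, Subgroup.lowerCentralSeries (⊤ : Subgroup (FreeGroup (Fin (k + t)))) c₁⁆)
        ⊔ Hsub k t n c₁ c₂) :=
  statement_3_general k t n c₁ c₂ hc₂ hc₁

end PaperFormal
end

section
/- Let u and w be words in disjoint sets of variables, let v = [u,w], and let K be a normal subgroup of a group G. Then [K v* G] = [[K u* G], w(G)]·[u(G), [K w* G]], where u(G) and w(G) are the verbal subgroups of G with respect to u and w. -/
/-!
Evaluating `v = [u, w]` at a tuple gives `[a, b]` with `a` a value of `u` and `b` one of `w`.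
Multiplying a `u`-variable by `r ∈ K` replaces `a` by `a'` with `a' a⁻¹ ∈ [K u* G]`, and
`[a', b] [a, b]⁻¹ = [a' a⁻¹, a b a⁻¹]`, where `a b a⁻¹` is again a value of `w`; symmetrically for
the `w`-variables. Conversely, since values of words are closed under conjugation, every
commutator of a generator of `[K u* G]` with a value of `w` (resp. of a value of `u` with a
generator of `[K w* G]`) arises in this way up to conjugation, and since all subgroups involved
are normal, commutators of generators suffice.
-/

namespace PaperFormal

open Subgroup
open scoped commutatorElement

section Group

variable {G : Type*} [Group G]

lemma commutatorElement_mul_inv_left (a a' b : G) :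
    ⁅a', b⁆ * ⁅a, b⁆⁻¹ = ⁅a' * a⁻¹, a * b * a⁻¹⁆ := by
  simp only [commutatorElement_def]; group

lemma commutatorElement_mul_inv_right (a b b' : G) :
    ⁅a, b'⁆ * ⁅a, b⁆⁻¹ = a * ⁅b' * b⁻¹, b * a⁻¹ * b⁻¹⁆ * a⁻¹ := by
  simp only [commutatorElement_def]; group

lemma closure_normal_of_conj_mem {S : Set G} (hS : ∀ g : G, ∀ x ∈ S, g * x * g⁻¹ ∈ S) :
    (closure S).Normal := by
  have hconj : Group.conjugatesOfSet S ⊆ S := by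
    intro y hy
    obtain ⟨x, hx, hxy⟩ := Group.mem_conjugatesOfSet_iff.mp hy
    obtain ⟨c, rfl⟩ := isConj_iff.mp hxy
    exact hS c x hx
  have : closure S = normalClosure S :=
    le_antisymm closure_le_normalClosure (closure_mono hconj)
  rw [this]
  exact normalClosure_normal

lemma commutator_closure_le {S T : Set G} {N : Subgroup G} [N.Normal]
    (h : ∀ x ∈ S, ∀ y ∈ T, ⁅x, y⁆ ∈ N) : ⁅closure S, closure T⁆ ≤ N := by
  rw [← QuotientGroup.ker_mk' N, ← Subgroup.map_eq_bot_iff, map_commutator, MonoidHom.map_closure,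
    MonoidHom.map_closure, commutator_eq_bot_iff_le_centralizer, closure_le,
    centralizer_closure]
  rintro _ ⟨x, hx, rfl⟩ _ ⟨y, hy, rfl⟩
  rw [eq_comm, ← commutatorElement_eq_one_iff_mul_comm, ← map_commutatorElement,
    QuotientGroup.mk'_apply, QuotientGroup.eq_one_iff]
  exact h x hx y hy

end Group

section Words

variable {α β G : Type*} [Group G]

lemma FreeGroup.lift_map (g : α → β) (f : β → G) (x : FreeGroup α) :
    FreeGroup.lift f (FreeGroup.map g x) = FreeGroup.lift (f ∘ g) x :=
  FreeGroup.lift_unique ((FreeGroup.lift f).comp (FreeGroup.map g)) (fun _ => by simp)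

lemma FreeGroup.lift_conj (f : α → G) (c : G) (x : FreeGroup α) :
    FreeGroup.lift (fun a => c * f a * c⁻¹) x = c * FreeGroup.lift f x * c⁻¹ :=
  (FreeGroup.lift_unique ((MulAut.conj c).toMonoidHom.comp (FreeGroup.lift f))
    (fun _ => by simp)).symm

lemma conj_mem_wordValues {V : Set (FreeGroup α)} (c : G) {x : G} (hx : x ∈ wordValues V G) :
    c * x * c⁻¹ ∈ wordValues V G := by
  obtain ⟨v, hv, f, rfl⟩ := hx
  exact ⟨v, hv, fun a => c * f a * c⁻¹, FreeGroup.lift_conj f c v⟩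

instance verbal_normal (V : Set (FreeGroup α)) : (verbal V G).Normal :=
  closure_normal_of_conj_mem fun c _ hx => conj_mem_wordValues c hx

lemma lift_mem_verbal_singleton (v : FreeGroup α) (f : α → G) :
    FreeGroup.lift f v ∈ verbal {v} G :=
  subset_closure ⟨v, rfl, f, rfl⟩

variable [DecidableEq α]

lemma lift_update_mul_inv_mem_KVstar (v : FreeGroup α) (f : α → G) (i : α) {K : Subgroup G}
    {r : G} (hr : r ∈ K) :
    FreeGroup.lift (Function.update f i (f i * r)) v * (FreeGroup.lift f v)⁻¹ ∈ KVstar {v} K :=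
  subset_closure ⟨v, rfl, f, i, r, hr, rfl⟩

instance KVstar_normal (V : Set (FreeGroup α)) (K : Subgroup G) [K.Normal] :
    (KVstar V K).Normal := by
  refine closure_normal_of_conj_mem ?_
  rintro c _ ⟨v, hv, f, i, r, hr, rfl⟩
  refine ⟨v, hv, fun a => c * f a * c⁻¹, i, c * r * c⁻¹, Normal.conj_mem ‹_› r hr c, ?_⟩
  have hupdate : Function.update (fun a => c * f a * c⁻¹) i (c * f i * c⁻¹ * (c * r * c⁻¹))
      = fun a => c * Function.update f i (f i * r) a * c⁻¹ := by
    funext a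
    rcases eq_or_ne a i with rfl | ha
    · simp [mul_assoc]
    · simp [Function.update_of_ne ha]
  rw [hupdate, FreeGroup.lift_conj, FreeGroup.lift_conj]
  group

end Words

section CommutatorWord

variable {α β G : Type*} [Group G]

def commWord (u : FreeGroup α) (w : FreeGroup β) : FreeGroup (α ⊕ β) :=
  ⁅FreeGroup.map (Sum.inl : α → α ⊕ β) u, FreeGroup.map (Sum.inr : β → α ⊕ β) w⁆

lemma lift_commWord (u : FreeGroup α) (w : FreeGroup β) (f : α → G) (h : β → G) :
    FreeGroup.lift (Sum.elim f h) (commWord u w) = ⁅FreeGroup.lift f u, FreeGroup.lift h w⁆ := by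
  rw [commWord, map_commutatorElement, FreeGroup.lift_map, FreeGroup.lift_map, Sum.elim_comp_inl,
    Sum.elim_comp_inr]

variable [DecidableEq α] [DecidableEq β] (u : FreeGroup α) (w : FreeGroup β) (K : Subgroup G)
  [K.Normal]

lemma KVstar_commWord_le :
    KVstar {commWord u w} K ≤ ⁅KVstar {u} K, verbal {w} G⁆ ⊔ ⁅verbal {u} G, KVstar {w} K⁆ := by
  refine (closure_le _).mpr ?_
  rintro _ ⟨v, hv, F, i, r, hr, rfl⟩
  obtain rfl := (Set.mem_singleton_iff.mp hv).symm
  rw [← Sum.elim_comp_inl_inr F]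
  set f := F ∘ Sum.inl
  set h := F ∘ Sum.inr
  have hu := lift_mem_verbal_singleton u f
  have hw := lift_mem_verbal_singleton w h
  rcases i with a | b
  · rw [Sum.update_elim_inl, Sum.elim_inl, lift_commWord, lift_commWord,
      commutatorElement_mul_inv_left]
    exact mem_sup_left <| commutator_mem_commutator (lift_update_mul_inv_mem_KVstar u f a hr)
      (Normal.conj_mem inferInstance _ hw _)
  · rw [Sum.update_elim_inr, Sum.elim_inr, lift_commWord, lift_commWord,
      commutatorElement_mul_inv_right]
    refine mem_sup_right <| Normal.conj_mem inferInstance _ ?_ _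
    rw [commutator_comm]
    exact commutator_mem_commutator (lift_update_mul_inv_mem_KVstar w h b hr)
      (Normal.conj_mem inferInstance _ (inv_mem hu) _)

lemma commutator_KVstar_verbal_le :
    ⁅KVstar {u} K, verbal {w} G⁆ ≤ KVstar {commWord u w} K := by
  refine commutator_closure_le ?_
  rintro _ ⟨u', hu, f, a, r, hr, rfl⟩ _ ⟨w', hw, h, rfl⟩
  obtain rfl := (Set.mem_singleton_iff.mp hu).symm
  obtain rfl := (Set.mem_singleton_iff.mp hw).symm
  -- conjugating the `w`-variables by `(lift f u)⁻¹` cancels the conjugation introduced by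
  -- `commutatorElement_mul_inv_left`
  have hmem := lift_update_mul_inv_mem_KVstar (commWord u w)
    (Sum.elim f fun b => (FreeGroup.lift f u)⁻¹ * h b * (FreeGroup.lift f u)⁻¹⁻¹) (Sum.inl a) hr
  rw [Sum.update_elim_inl, Sum.elim_inl, lift_commWord, lift_commWord,
    commutatorElement_mul_inv_left, FreeGroup.lift_conj] at hmem
  simpa only [inv_inv, mul_assoc, mul_inv_cancel_left, mul_inv_cancel, mul_one] using hmem

lemma commutator_verbal_KVstar_le :
    ⁅verbal {u} G, KVstar {w} K⁆ ≤ KVstar {commWord u w} K := by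
  refine commutator_closure_le ?_
  rintro _ ⟨u', hu, f, rfl⟩ _ ⟨w', hw, h, b, r, hr, rfl⟩
  obtain rfl := (Set.mem_singleton_iff.mp hu).symm
  obtain rfl := (Set.mem_singleton_iff.mp hw).symm
  set c := FreeGroup.lift f u
  set B := FreeGroup.lift h w
  set B' := FreeGroup.lift (Function.update h b (h b * r)) w
  have hmem := lift_update_mul_inv_mem_KVstar (commWord u w)
    (Sum.elim (fun a => B⁻¹ * f a * B⁻¹⁻¹) h) (Sum.inr b) hr
  rw [Sum.update_elim_inr, Sum.elim_inr, lift_commWord, lift_commWord, FreeGroup.lift_conj]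
    at hmem
  -- with the `u`-variables conjugated by `B⁻¹`, the generator `hmem` is a conjugate of the goal
  have hconj : ⁅c, B' * B⁻¹⁆ = ⁅B⁻¹, c⁆⁻¹ * (⁅B⁻¹ * c * B⁻¹⁻¹, B'⁆ * ⁅B⁻¹ * c * B⁻¹⁻¹, B⁆⁻¹)
      * ⁅B⁻¹, c⁆⁻¹⁻¹ := by
    simp only [commutatorElement_def]; group
  rw [hconj]
  exact Normal.conj_mem inferInstance _ hmem _

end CommutatorWord

/-- Let `u` and `w` be words in disjoint sets of variables (realized
here over the two summands of `α ⊕ β`), let `v = [u,w]`, and let `K` be a normal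
subgroup of a group `G`. Then `[K v* G] = [[K u* G], w(G)]·[u(G), [K w* G]]` (a product
of two normal subgroups, hence equal to their join). -/
theorem statement_18 {α β : Type*} [DecidableEq α] [DecidableEq β]
    (u : FreeGroup α) (w : FreeGroup β) (G : Type*) [Group G]
    (K : Subgroup G) [K.Normal] :
    KVstar {(⁅FreeGroup.map (Sum.inl : α → α ⊕ β) u,
             FreeGroup.map (Sum.inr : β → α ⊕ β) w⁆ : FreeGroup (α ⊕ β))} K
      = ⁅KVstar {u} K, verbal {w} G⁆ ⊔ ⁅verbal {u} G, KVstar {w} K⁆ :=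
  le_antisymm (KVstar_commWord_le u w K)
    (sup_le (commutator_KVstar_verbal_le u w K) (commutator_verbal_KVstar_le u w K))

end PaperFormal
end
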